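/- arXiv:2410.23977 — 4 statements merged into one kernel-verified Lean document; each statement's English description precedes it below -/
import Mathlib

section
/- Let μ be a unitary 2-design on the n-qubit Hilbert space, ρ a density operator with purity ℘ = tr(ρ²), and O a traceless Hermitian operator. Then E_{U∼μ}[(tr(U O U† ρ))²] = ((d℘ − 1)/(d(d² − 1)))·‖O‖₂², and likewise E_{U∼μ}[(tr(O U ρ U†))²] equals the same value. -/
/-!
By the design property the second moments may be computed for the Haar measure `ν`, where both
are pairings `tr (T(A) R)` of the twirl `T(A) = E_ν[(U ⊗ U) A (U ⊗ U)†]` with `R`, for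
`{A, R} = {O ⊗ O, ρ ⊗ ρ}`. Left invariance makes `T(A)` commute with every `U ⊗ U`, and the
commutant of `{U ⊗ U}` is spanned by `1` and the swap `S`: the unitaries `1 + (z - 1) P`, for
projections `P`, force commutation with `P ⊗ 1 + 1 ⊗ P`; projections span all matrices, so also
with every `B ⊗ C + C ⊗ B`, and matrix units `B, C` then pin down the entries. The two
coefficients of `T(A) = a 1 + b S` are fixed by `tr T(A) = tr A` and `tr (T(A) S) = tr (A S)`,
which gives the Weingarten formula; with `tr O = 0`, `tr ρ = 1` and `tr ((X ⊗ X) S) = tr (X²)` it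
becomes the claim.
-/

open MeasureTheory Matrix
open scoped BigOperators ENNReal Real ComplexConjugate ComplexOrder

noncomputable section

namespace ThriftyShadow

/-- basis index set of the `n`-qubit Hilbert space -/
abbrev Idx (n : ℕ) := Fin n → Fin 2

/-- linear operators on the `n`-qubit Hilbert space -/
abbrev Op (n : ℕ) := Matrix (Idx n) (Idx n) ℂ

/-- index set for the `t`-th tensor power -/
abbrev TIdx (n t : ℕ) := Fin t → Idx n

/-- operators on the `t`-th tensor power -/
abbrev TMat (n t : ℕ) := Matrix (TIdx n t) (TIdx n t) ℂ

/-- the dimension `d = 2^n`, as a real number -/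
def dim (n : ℕ) : ℝ := 2 ^ n

/-- tensor product of a family of operators: `(⨂ i, f i) (x,y) = ∏ i, (f i) (x i) (y i)` -/
def tpow {n t : ℕ} (f : Fin t → Op n) : TMat n t :=
  Matrix.of fun x y => ∏ i, f i (x i) (y i)

/-- the projector `|b⟩⟨b|` onto a computational basis state -/
def ket (n : ℕ) (b : Idx n) : Op n := Matrix.single b b 1

/-- `|φ⟩⟨φ|` for a vector `φ` -/
def ketbra {n : ℕ} (φ : Idx n → ℂ) : Op n := Matrix.vecMulVec φ (star φ)

/-- a density operator: positive semidefinite with unit trace -/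
def IsDensity {n : ℕ} (ρ : Op n) : Prop := ρ.PosSemidef ∧ ρ.trace = 1

/-- squared Hilbert–Schmidt norm `tr(O²)` of a Hermitian operator -/
def hsNormSq {n : ℕ} (O : Op n) : ℝ := ((O * O).trace).re

/-- purity `tr(ρ²)` -/
def purity {n : ℕ} (ρ : Op n) : ℝ := ((ρ * ρ).trace).re

/-- fidelity `⟨φ|ρ|φ⟩` -/
def fid {n : ℕ} (ρ : Op n) (φ : Idx n → ℂ) : ℝ := (star φ ⬝ᵥ ρ.mulVec φ).re

/-- the unitary group `U(d)` on the `n`-qubit Hilbert space -/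
abbrev UG (n : ℕ) := Matrix.unitaryGroup (Idx n) ℂ

instance (n : ℕ) : MeasurableSpace (UG n) := borel _

/-- entries of the `t`-fold twirl `E_{U∼μ}[U^{⊗t} A (U†)^{⊗t}]` -/
def twirlEntry {n t : ℕ} (μ : Measure (UG n)) (A : TMat n t) (i j : TIdx n t) : ℂ :=
  ∫ U : UG n,
    (((tpow fun _ => (U : Op n)) * A * (tpow fun _ => (U : Op n)ᴴ) : TMat n t)) i j ∂μ

/-- `ν` is the Haar probability measure on `U(d)`: the (unique) left-invariant
Borel probability measure -/
def IsHaar {n : ℕ} (ν : Measure (UG n)) : Prop :=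
  IsProbabilityMeasure ν ∧ ∀ V : UG n, Measure.map (fun U => V * U) ν = ν

/-- `μ` is a unitary `t`-design: its `t`-fold twirl agrees with that of the
Haar measure `ν` -/
def IsTDesign {n : ℕ} (t : ℕ) (μ ν : Measure (UG n)) : Prop :=
  ∀ A : TMat n t, ∀ i j, twirlEntry μ A i j = twirlEntry ν A i j

/-- the single-shot shadow-estimation variance `V(O,ρ)` of a unitary 2-design `μ` -/
def Vshadow {n : ℕ} (μ : Measure (UG n)) (O ρ : Op n) : ℝ :=
  ((∫ U : UG n, ∑ b : Idx n, (((dim n + 1 : ℝ) : ℂ))^2 *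
      ((tpow fun _ : Fin 3 => (U : Op n)ᴴ * ket n b * (U : Op n)) * tpow ![ρ, O, O]).trace ∂μ)
    - ((O * ρ).trace)^2).re

/-- the cross moment operator `Ω` of a unitary ensemble given by a measure `ω` on a
parameter space together with a (unitary-valued) map `f` into operators -/
def Omega {n : ℕ} {α : Type*} [MeasurableSpace α] (ω : Measure α) (f : α → Op n) : TMat n 4 :=
  Matrix.of fun i j =>
    ∑ a : Idx n, ∑ b : Idx n,
      ∫ x, (((tpow fun _ => (f x)ᴴ) * (tpow ![ket n a, ket n a, ket n b, ket n b])
              * (tpow fun _ => f x) : TMat n 4)) i j ∂ω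

/-- the reuse variance `V*(O,ρ)` of the unitary ensemble `(ω, f)` -/
def Vstar {n : ℕ} {α : Type*} [MeasurableSpace α] (ω : Measure α) (f : α → Op n)
    (O ρ : Op n) : ℝ :=
  ((((dim n + 1 : ℝ) : ℂ))^2 * (Omega ω f * tpow ![O, ρ, O, ρ]).trace
    - ((O * ρ).trace)^2).re

/-- `V*(O,ρ)` for an ensemble which is simply a measure on the unitary group -/
def VstarU {n : ℕ} (μ : Measure (UG n)) (O ρ : Op n) : ℝ :=
  Vstar μ (fun U => (U : Op n)) O ρ

/-- `V*(O) = sup_ρ V*(O,ρ)`, supremum over density operators -/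
def VstarSup {n : ℕ} {α : Type*} [MeasurableSpace α] (ω : Measure α) (f : α → Op n)
    (O : Op n) : ℝ :=
  sSup {v | ∃ ρ : Op n, IsDensity ρ ∧ v = Vstar ω f O ρ}

/-- the single-qubit Pauli matrices `I, X, Y, Z` -/
def pauli1 : Fin 4 → Matrix (Fin 2) (Fin 2) ℂ :=
  ![1, !![0, 1; 1, 0], !![0, -Complex.I; Complex.I, 0], !![1, 0; 0, -1]]

/-- index set for `n`-qubit Pauli operators -/
abbrev PIdx (n : ℕ) := Fin n → Fin 4

/-- the `n`-qubit Pauli operator labelled by `p` -/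
def pauliOp (n : ℕ) (p : PIdx n) : Op n :=
  Matrix.of fun x y => ∏ i, pauli1 (p i) (x i) (y i)

/-- the `n`-qubit Pauli group (Pauli operators with phases `i^k`) -/
def pauliGroup (n : ℕ) : Set (Op n) :=
  {A | ∃ (k : Fin 4) (p : PIdx n), A = Complex.I ^ (k : ℕ) • pauliOp n p}

/-- the Clifford group, as the set of unitaries normalizing the Pauli group -/
def cliffordSet (n : ℕ) : Set (UG n) :=
  {U | (fun A => (U : Op n) * A * (U : Op n)ᴴ) '' pauliGroup n = pauliGroup n}

/-- `μ` is the Haar probability measure of the Clifford group, viewed as a measure on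
`U(d)`: it is supported on the Clifford group and left-invariant under it -/
def IsCliffordHaar {n : ℕ} (μ : Measure (UG n)) : Prop :=
  μ (cliffordSet n) = 1 ∧ ∀ C ∈ cliffordSet n, Measure.map (fun U => C * U) μ = μ

/-- characteristic function `Ξ_A(P) = tr(A P)` (real part) -/
def XiC {n : ℕ} (A : Op n) (p : PIdx n) : ℝ := ((A * pauliOp n p).trace).re

/-- cross characteristic function `Ξ_{ρ,O}(P) = tr(ρP) tr(OP)` -/
def crossXi {n : ℕ} (ρ O : Op n) (p : PIdx n) : ℝ := XiC ρ p * XiC O p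

/-- twisted cross characteristic function `Ξ̃_{ρ,O}(P) = tr(ρ P O P)` -/
def twistXi {n : ℕ} (ρ O : Op n) (p : PIdx n) : ℝ :=
  ((ρ * pauliOp n p * O * pauliOp n p).trace).re

/-- the quantity `V_△(O,ρ)` -/
def Vtri {n : ℕ} (O ρ : Op n) : ℝ :=
  (dim n + 1) / (dim n * (dim n + 2)) *
    ((∑ p : PIdx n, (crossXi ρ O p)^2) + ∑ p : PIdx n, twistXi ρ O p * crossXi ρ O p)

/-- `V_△(O) = sup_ρ V_△(O,ρ)` over density operators -/
def VtriSup {n : ℕ} (O : Op n) : ℝ :=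
  sSup {v | ∃ ρ : Op n, IsDensity ρ ∧ v = Vtri O ρ}

/-- the sum of the `d` largest entries of a vector indexed by Pauli labels -/
def topdSum {n : ℕ} (g : PIdx n → ℝ) : ℝ :=
  sSup {x | ∃ S : Finset (PIdx n), S.card = 2 ^ n ∧ x = ∑ p ∈ S, g p}

/-- Pauli expectation value `⟨φ|P|φ⟩` of a pure state -/
def pExp {n : ℕ} (φ : Idx n → ℂ) (p : PIdx n) : ℝ :=
  (star φ ⬝ᵥ (pauliOp n p).mulVec φ).re

/-- stabilizer 2-Rényi entropy `M₂(φ)` of a pure state -/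
def M2 {n : ℕ} (φ : Idx n → ℂ) : ℝ :=
  - Real.logb 2 ((dim n)⁻¹ * ∑ p : PIdx n, (pExp φ p)^4)

/-- stabilizer 2-Rényi entropy `M̃₂(ρ)` of a (mixed) state -/
def M2mixed {n : ℕ} (ρ : Op n) : ℝ :=
  - Real.logb 2 ((∑ p : PIdx n, (XiC ρ p)^4) / (dim n * purity ρ))

/-- the T gate -/
def Tgate : Matrix (Fin 2) (Fin 2) ℂ :=
  !![1, 0; 0, Complex.exp (Complex.I * (Real.pi / 4))]

/-- the Hadamard gate -/
def Hgate : Matrix (Fin 2) (Fin 2) ℂ :=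
  ((Real.sqrt 2 : ℂ))⁻¹ • !![1, 1; 1, -1]

/-- a single-qubit gate `A` applied in parallel to the last `k` qubits -/
def layer (n k : ℕ) (A : Matrix (Fin 2) (Fin 2) ℂ) : Op n :=
  Matrix.of fun x y =>
    ∏ i : Fin n, (if (i : ℕ) < n - k then (1 : Matrix (Fin 2) (Fin 2) ℂ) else A) (x i) (y i)

/-- the interleaved Clifford–T circuit `U_l T̂_k U_{l-1} T̂_k ⋯ T̂_k U_0` -/
def circuit (n k : ℕ) : (l : ℕ) → (Fin (l + 1) → UG n) → Op n
  | 0 => fun Us => (Us 0 : Op n)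
  | (l + 1) => fun Us =>
      (Us (Fin.last (l + 1)) : Op n) * layer n k Tgate * circuit n k l (fun i => Us i.castSucc)


/-- the computational basis state `|0…0⟩` as a vector -/
def e0 (n : ℕ) : Idx n → ℂ := fun b => if b = (fun _ => (0 : Fin 2)) then 1 else 0

end ThriftyShadow

namespace TwoDesign

open Kronecker

section Swap

variable {R m : Type*} [CommSemiring R] [DecidableEq m]

variable (R m) in
def swapMatrix : Matrix (m × m) (m × m) R := Equiv.Perm.permMatrix R (Equiv.prodComm m m)

lemma swapMatrix_apply (p q : m × m) : swapMatrix R m p q = if p.swap = q then 1 else 0 := by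
  simp [swapMatrix]

variable [Fintype m]

lemma swapMatrix_mul_kronecker (A B : Matrix m m R) :
    swapMatrix R m * (A ⊗ₖ B) = (B ⊗ₖ A) * swapMatrix R m := by
  ext ⟨a, b⟩ ⟨c, d⟩
  simp [swapMatrix, PEquiv.toMatrix_toPEquiv_mul, PEquiv.mul_toMatrix_toPEquiv, mul_comm]

lemma swapMatrix_mul_self : swapMatrix R m * swapMatrix R m = 1 := by
  rw [swapMatrix, PEquiv.toMatrix_toPEquiv_mul]
  ext ⟨a, b⟩ ⟨c, d⟩
  simp [one_apply]

lemma trace_kronecker_mul_swapMatrix (A B : Matrix m m R) :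
    trace ((A ⊗ₖ B) * swapMatrix R m) = trace (A * B) := by
  simp [swapMatrix, PEquiv.mul_toMatrix_toPEquiv, trace, mul_apply, Fintype.sum_prod_type]

lemma trace_swapMatrix : trace (swapMatrix R m) = Fintype.card m := by
  simpa using trace_kronecker_mul_swapMatrix (R := R) (1 : Matrix m m R) 1

end Swap

section Commutant

variable {m : Type*}

lemma vecMulVec_star_eq_polarization (χ ψ : m → ℂ) :
    vecMulVec χ (star ψ) = (4 : ℂ)⁻¹ •
      (vecMulVec (ψ + χ) (star (ψ + χ)) - vecMulVec (ψ - χ) (star (ψ - χ))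
        - Complex.I • (vecMulVec (ψ + Complex.I • χ) (star (ψ + Complex.I • χ))
          - vecMulVec (ψ - Complex.I • χ) (star (ψ - Complex.I • χ)))) := by
  ext a b
  simp only [vecMulVec_apply, Matrix.smul_apply, Matrix.sub_apply, Pi.add_apply, Pi.sub_apply,
    Pi.smul_apply, Pi.star_apply, star_add, star_sub, star_smul, smul_eq_mul, Complex.star_def,
    Complex.conj_I]
  ring_nf
  simp only [Complex.I_sq]
  ring

variable [DecidableEq m]

variable (m) in
def kroneckerSum : Matrix m m ℂ →ₗ[ℂ] Matrix (m × m) (m × m) ℂ :=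
  (kroneckerBilinear (R := ℂ)).flip 1 + kroneckerBilinear (R := ℂ) 1

lemma kroneckerSum_apply (B : Matrix m m ℂ) : kroneckerSum m B = B ⊗ₖ 1 + 1 ⊗ₖ B := rfl

variable [Fintype m]

lemma one_add_smul_mem_unitaryGroup {P : Matrix m m ℂ} (hP : IsStarProjection P) {z : ℂ}
    (hz : z * star z = 1) : 1 + (z - 1) • P ∈ unitaryGroup m ℂ := by
  rw [mem_unitaryGroup_iff, star_add, star_one, star_smul, hP.isSelfAdjoint.star_eq]
  have hPP : P * P = P := hP.isIdempotentElem.eq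
  calc (1 + (z - 1) • P) * (1 + star (z - 1) • P)
      = 1 + ((z - 1) + star (z - 1) + (z - 1) * star (z - 1)) • P := by
        simp only [mul_add, add_mul, one_mul, mul_one, smul_mul_smul_comm, hPP, add_smul]
        abel
    _ = 1 := by
        have hcoeff : (z - 1) + star (z - 1) + (z - 1) * star (z - 1) = 0 := by
          rw [star_sub, star_one]
          linear_combination hz
        rw [hcoeff, zero_smul, add_zero]

lemma isStarProjection_inv_smul_vecMulVec {φ : m → ℂ} (hφ : φ ≠ 0) :
    IsStarProjection ((star φ ⬝ᵥ φ)⁻¹ • vecMulVec φ (star φ)) := by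
  have hs : star φ ⬝ᵥ φ ≠ 0 := dotProduct_star_self_eq_zero.not.mpr hφ
  refine ⟨?_, ?_⟩
  · rw [IsIdempotentElem, smul_mul_smul_comm, vecMulVec_mul_vecMulVec, vecMulVec_smul,
      smul_smul]
    congr 1
    field_simp
  · rw [IsSelfAdjoint, star_smul, star_inv₀, ← star_dotProduct, star_eq_conjTranspose,
      conjTranspose_vecMulVec, star_star]

lemma span_isStarProjection :
    Submodule.span ℂ {P : Matrix m m ℂ | IsStarProjection P} = ⊤ := by
  set S := Submodule.span ℂ {P : Matrix m m ℂ | IsStarProjection P}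
  have hketbra : ∀ φ : m → ℂ, vecMulVec φ (star φ) ∈ S := by
    intro φ
    rcases eq_or_ne φ 0 with rfl | hφ
    · simp
    · have hs : star φ ⬝ᵥ φ ≠ 0 := dotProduct_star_self_eq_zero.not.mpr hφ
      have h := S.smul_mem (star φ ⬝ᵥ φ)
        (Submodule.subset_span (isStarProjection_inv_smul_vecMulVec hφ))
      rwa [smul_smul, mul_inv_cancel₀ hs, one_smul] at h
  have hrank : ∀ χ ψ : m → ℂ, vecMulVec χ (star ψ) ∈ S := by
    intro χ ψ
    rw [vecMulVec_star_eq_polarization]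
    exact S.smul_mem _ (S.sub_mem (S.sub_mem (hketbra _) (hketbra _))
      (S.smul_mem _ (S.sub_mem (hketbra _) (hketbra _))))
  refine eq_top_iff.2 fun B _ => ?_
  rw [matrix_eq_sum_single B]
  refine S.sum_mem fun i _ => S.sum_mem fun j _ => ?_
  have hsingle :
      single i j (B i j) = B i j • vecMulVec (Pi.single i 1) (star (Pi.single j 1)) := by
    rw [show star (Pi.single j 1 : m → ℂ) = Pi.single j 1 by simp,
      ← single_eq_single_vecMulVec_single, smul_single, smul_eq_mul, mul_one]
  rw [hsingle]
  exact S.smul_mem _ (hrank _ _)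

variable {M : Matrix (m × m) (m × m) ℂ}

lemma commute_kroneckerSum_of_isStarProjection
    (hM : ∀ U ∈ unitaryGroup m ℂ, Commute (U ⊗ₖ U) M) {P : Matrix m m ℂ}
    (hP : IsStarProjection P) : Commute (kroneckerSum m P) M := by
  -- `z = -1` and `z = i` give two independent combinations of `kroneckerSum m P` and `P ⊗ₖ P`
  have key : ∀ z : ℂ, z * star z = 1 →
      Commute ((z - 1) • kroneckerSum m P + ((z - 1) * (z - 1)) • (P ⊗ₖ P)) M := by
    intro z hz
    have h := hM _ (one_add_smul_mem_unitaryGroup hP hz)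
    have hexp : (1 + (z - 1) • P) ⊗ₖ (1 + (z - 1) • P)
        = 1 + ((z - 1) • kroneckerSum m P + ((z - 1) * (z - 1)) • (P ⊗ₖ P)) := by
      simp only [kroneckerSum_apply, add_kronecker, kronecker_add, smul_kronecker,
        kronecker_smul, one_kronecker_one, smul_smul, smul_add]
      abel
    rw [hexp] at h
    simpa using h.sub_left (Commute.one_left M)
  have hL : kroneckerSum m P
      = (-Complex.I / 2) • ((-1 - 1 : ℂ) • kroneckerSum m P
          + ((-1 - 1 : ℂ) * (-1 - 1)) • (P ⊗ₖ P))
        - ((Complex.I - 1) • kroneckerSum m P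
          + ((Complex.I - 1) * (Complex.I - 1)) • (P ⊗ₖ P)) := by
    match_scalars <;> ring_nf
    simp [Complex.I_sq]
  rw [hL]
  exact ((key (-1) (by norm_num)).smul_left _).sub_left (key Complex.I (by simp))

lemma commute_kroneckerSum (hM : ∀ U ∈ unitaryGroup m ℂ, Commute (U ⊗ₖ U) M)
    (B : Matrix m m ℂ) : Commute (kroneckerSum m B) M := by
  have hB : B ∈ Submodule.span ℂ {P : Matrix m m ℂ | IsStarProjection P} := by
    rw [span_isStarProjection]; trivial
  induction hB using Submodule.span_induction with
  | mem P hP => exact commute_kroneckerSum_of_isStarProjection hM hP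
  | zero => simp
  | add B C _ _ hB hC => rw [map_add]; exact hB.add_left hC
  | smul c B _ hB => rw [map_smul]; exact hB.smul_left c

lemma commute_kronecker_add_kronecker (hM : ∀ U ∈ unitaryGroup m ℂ, Commute (U ⊗ₖ U) M)
    (B C : Matrix m m ℂ) : Commute (B ⊗ₖ C + C ⊗ₖ B) M := by
  have h : B ⊗ₖ C + C ⊗ₖ B
      = kroneckerSum m B * kroneckerSum m C - kroneckerSum m (B * C) := by
    simp only [kroneckerSum_apply, add_mul, mul_add, ← mul_kronecker_mul, mul_one, one_mul]
    abel
  rw [h]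
  exact ((commute_kroneckerSum hM B).mul_left (commute_kroneckerSum hM C)).sub_left
    (commute_kroneckerSum hM _)

lemma eq_smul_one_add_smul_swapMatrix_of_commute
    (hM : ∀ B C : Matrix m m ℂ, Commute (B ⊗ₖ C + C ⊗ₖ B) M) {i j : m} (hij : i ≠ j) :
    M = M (i, j) (i, j) • 1 + M (i, j) (j, i) • swapMatrix ℂ m := by
  -- for `B = E_{i x₁}`, `C = E_{j x₂}` and `i ≠ j`, the `((i, j), y)` entry of the relation reads
  -- `M x y = [x = y] M_{ij,ij} + [x.swap = y] M_{ij,ji}`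
  ext ⟨x₁, x₂⟩ y
  have h := congrFun (congrFun (hM (single i x₁ 1) (single j x₂ 1)).eq (i, j)) y
  simp [single_kronecker_single, mul_add, mul_apply, single_apply, hij] at h
  rw [h]
  simp [swapMatrix_apply, one_apply, Finset.sum_add_distrib, ite_and]

theorem exists_eq_smul_one_add_smul_swapMatrix [Nontrivial m]
    (hM : ∀ U ∈ unitaryGroup m ℂ, Commute (U ⊗ₖ U) M) :
    ∃ a b : ℂ, M = a • 1 + b • swapMatrix ℂ m := by
  obtain ⟨i, j, hij⟩ := exists_pair_ne m
  exact ⟨_, _,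
    eq_smul_one_add_smul_swapMatrix_of_commute (commute_kronecker_add_kronecker hM) hij⟩

end Commutant

section EntrywiseIntegral

variable {ι α : Type*} [Fintype ι] [MeasurableSpace α] {μ : Measure α}
  {F : α → Matrix ι ι ℂ}

lemma integrable_mul_mul_apply (hF : ∀ k l, Integrable (fun x => F x k l) μ)
    (B C : Matrix ι ι ℂ) (p q : ι) : Integrable (fun x => (B * F x * C) p q) μ := by
  simp only [mul_apply, Finset.sum_mul]
  exact integrable_finsetSum _ fun l _ => integrable_finsetSum _ fun k _ =>
    ((hF k l).const_mul _).mul_const _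

lemma integral_mul_mul_apply (hF : ∀ k l, Integrable (fun x => F x k l) μ)
    (B C : Matrix ι ι ℂ) (p q : ι) :
    ∫ x, (B * F x * C) p q ∂μ = (B * of (fun k l => ∫ x, F x k l ∂μ) * C) p q := by
  simp only [mul_apply, Finset.sum_mul, of_apply]
  rw [integral_finsetSum _ fun l _ => integrable_finsetSum _ fun k _ =>
    ((hF k l).const_mul _).mul_const _]
  refine Finset.sum_congr rfl fun l _ => ?_
  rw [integral_finsetSum _ fun k _ => ((hF k l).const_mul _).mul_const _]
  refine Finset.sum_congr rfl fun k _ => ?_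
  rw [integral_mul_const, integral_const_mul]

end EntrywiseIntegral

section Twirl

variable {m : Type*} [Fintype m]

def conjKronecker (U : Matrix m m ℂ) (A : Matrix (m × m) (m × m) ℂ) :
    Matrix (m × m) (m × m) ℂ :=
  (U ⊗ₖ U) * A * (U ⊗ₖ U)ᴴ

lemma conjKronecker_mul (U V : Matrix m m ℂ) (A : Matrix (m × m) (m × m) ℂ) :
    conjKronecker (V * U) A = conjKronecker V (conjKronecker U A) := by
  simp only [conjKronecker, mul_kronecker_mul, conjTranspose_mul, Matrix.mul_assoc]

lemma conjKronecker_kronecker_self (U X : Matrix m m ℂ) :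
    conjKronecker U (X ⊗ₖ X) = (U * X * Uᴴ) ⊗ₖ (U * X * Uᴴ) := by
  rw [conjKronecker, conjTranspose_kronecker, mul_kronecker_mul, mul_kronecker_mul]

lemma ofReal_re_trace_mul_self {X : Matrix m m ℂ} (hX : X.IsHermitian) :
    (((X * X).trace.re : ℝ) : ℂ) = (X * X).trace :=
  Complex.conj_eq_iff_re.mp <| by
    rw [← Complex.star_def, ← trace_conjTranspose, conjTranspose_mul, hX.eq]

variable [DecidableEq m]

lemma kronecker_self_mem_unitaryGroup {U : Matrix m m ℂ} (hU : U ∈ unitaryGroup m ℂ) :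
    U ⊗ₖ U ∈ unitaryGroup (m × m) ℂ := by
  rw [mem_unitaryGroup_iff', star_eq_conjTranspose, conjTranspose_kronecker, ← mul_kronecker_mul,
    ← star_eq_conjTranspose, mem_unitaryGroup_iff'.mp hU, one_kronecker_one]

lemma trace_conjKronecker_mul {U : Matrix m m ℂ} (hU : U ∈ unitaryGroup m ℂ)
    {R : Matrix (m × m) (m × m) ℂ} (hR : Commute (U ⊗ₖ U) R)
    (A : Matrix (m × m) (m × m) ℂ) :
    trace (conjKronecker U A * R) = trace (A * R) := by
  have hUU : (U ⊗ₖ U)ᴴ * (U ⊗ₖ U) = 1 :=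
    mem_unitaryGroup_iff'.mp (kronecker_self_mem_unitaryGroup hU)
  rw [conjKronecker, Matrix.mul_assoc, Matrix.mul_assoc, trace_mul_comm]
  simp only [Matrix.mul_assoc]
  rw [← hR.eq, ← Matrix.mul_assoc (U ⊗ₖ U)ᴴ, hUU, Matrix.one_mul]

lemma norm_conjKronecker_apply_le {U : Matrix m m ℂ} (hU : U ∈ unitaryGroup m ℂ)
    (A : Matrix (m × m) (m × m) ℂ) (p q : m × m) :
    ‖conjKronecker U A p q‖ ≤ ∑ k, ∑ l, ‖A k l‖ := by
  have hU' : Uᴴ ∈ unitaryGroup m ℂ := by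
    rw [← star_eq_conjTranspose]; exact Unitary.star_mem hU
  have entry_le :
      ∀ {V : Matrix m m ℂ}, V ∈ unitaryGroup m ℂ → ∀ p q, ‖(V ⊗ₖ V) p q‖ ≤ 1 :=
    fun hV p q => by
      rw [kronecker_apply, norm_mul]
      exact mul_le_one₀ (entry_norm_bound_of_unitary hV _ _) (norm_nonneg _)
        (entry_norm_bound_of_unitary hV _ _)
  simp only [conjKronecker, conjTranspose_kronecker, mul_apply, Finset.sum_mul]
  rw [Finset.sum_comm]
  refine (norm_sum_le _ _).trans (Finset.sum_le_sum fun k _ => ?_)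
  refine (norm_sum_le _ _).trans (Finset.sum_le_sum fun l _ => ?_)
  rw [norm_mul, norm_mul]
  calc ‖(U ⊗ₖ U) p k‖ * ‖A k l‖ * ‖(Uᴴ ⊗ₖ Uᴴ) l q‖
      ≤ 1 * ‖A k l‖ * 1 := by
        gcongr
        · exact entry_le hU p k
        · exact entry_le hU' l q
    _ = ‖A k l‖ := by ring

lemma continuous_conjKronecker_apply (A : Matrix (m × m) (m × m) ℂ) (p q : m × m) :
    Continuous fun U : unitaryGroup m ℂ => conjKronecker U A p q := by
  have hU : Continuous fun U : unitaryGroup m ℂ => (U : Matrix m m ℂ) := continuous_subtype_val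
  have hUU :
      Continuous fun U : unitaryGroup m ℂ => (U : Matrix m m ℂ) ⊗ₖ (U : Matrix m m ℂ) :=
    continuous_matrix fun p q => (hU.matrix_elem _ _).mul (hU.matrix_elem _ _)
  exact ((hUU.matrix_mul continuous_const).matrix_mul hUU.matrix_conjTranspose).matrix_elem p q

variable [MeasurableSpace (unitaryGroup m ℂ)]

def twirl (μ : Measure (unitaryGroup m ℂ)) (A : Matrix (m × m) (m × m) ℂ) :
    Matrix (m × m) (m × m) ℂ :=
  of fun p q => ∫ U : unitaryGroup m ℂ, conjKronecker U A p q ∂μ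

variable [BorelSpace (unitaryGroup m ℂ)] (μ : Measure (unitaryGroup m ℂ))

lemma integrable_conjKronecker_apply [IsFiniteMeasure μ] (A : Matrix (m × m) (m × m) ℂ)
    (p q : m × m) :
    Integrable (fun U : unitaryGroup m ℂ => conjKronecker U A p q) μ :=
  .of_bound (continuous_conjKronecker_apply A p q).aestronglyMeasurable _
    (ae_of_all _ fun U => norm_conjKronecker_apply_le U.2 A p q)

lemma trace_twirl_mul [IsFiniteMeasure μ] (A R : Matrix (m × m) (m × m) ℂ) :
    trace (twirl μ A * R) = ∫ U : unitaryGroup m ℂ, trace (conjKronecker U A * R) ∂μ := by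
  have hF := integrable_conjKronecker_apply μ A
  simp only [trace, diag]
  rw [integral_finsetSum _ fun p _ => by simpa using integrable_mul_mul_apply hF 1 R p p]
  refine Finset.sum_congr rfl fun p _ => ?_
  simpa [twirl] using (integral_mul_mul_apply hF 1 R p p).symm

lemma trace_twirl_mul_of_commute [IsProbabilityMeasure μ] {R : Matrix (m × m) (m × m) ℂ}
    (hR : ∀ U ∈ unitaryGroup m ℂ, Commute (U ⊗ₖ U) R) (A : Matrix (m × m) (m × m) ℂ) :
    trace (twirl μ A * R) = trace (A * R) := by
  rw [trace_twirl_mul,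
    integral_congr_ae (ae_of_all _ fun U => trace_conjKronecker_mul U.2 (hR _ U.2) A),
    integral_const, probReal_univ, one_smul]

lemma conjKronecker_twirl [IsFiniteMeasure μ] [μ.IsMulLeftInvariant] (V : unitaryGroup m ℂ)
    (A : Matrix (m × m) (m × m) ℂ) : conjKronecker V (twirl μ A) = twirl μ A := by
  ext p q
  calc conjKronecker V (twirl μ A) p q
      = ∫ U : unitaryGroup m ℂ, conjKronecker V (conjKronecker U A) p q ∂μ :=
        (integral_mul_mul_apply (integrable_conjKronecker_apply μ A) _ _ p q).symm
    _ = ∫ U : unitaryGroup m ℂ, conjKronecker (V * U : unitaryGroup m ℂ) A p q ∂μ := by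
        simp [conjKronecker_mul]
    _ = twirl μ A p q :=
        integral_mul_left_eq_self
          (fun U : unitaryGroup m ℂ => conjKronecker (U : Matrix m m ℂ) A p q) V

lemma commute_kronecker_twirl [IsFiniteMeasure μ] [μ.IsMulLeftInvariant] {V : Matrix m m ℂ}
    (hV : V ∈ unitaryGroup m ℂ) (A : Matrix (m × m) (m × m) ℂ) :
    Commute (V ⊗ₖ V) (twirl μ A) := by
  have hinv : conjKronecker V (twirl μ A) = twirl μ A := conjKronecker_twirl μ ⟨V, hV⟩ A
  have hVV : (V ⊗ₖ V)ᴴ * (V ⊗ₖ V) = 1 :=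
    mem_unitaryGroup_iff'.mp (kronecker_self_mem_unitaryGroup hV)
  calc (V ⊗ₖ V) * twirl μ A
      = (V ⊗ₖ V) * twirl μ A * ((V ⊗ₖ V)ᴴ * (V ⊗ₖ V)) := by
        rw [hVV, Matrix.mul_one]
    _ = twirl μ A * (V ⊗ₖ V) := by
        rw [← Matrix.mul_assoc, ← conjKronecker, hinv]

lemma integral_trace_conj_mul_sq [IsFiniteMeasure μ] (X Y : Matrix m m ℂ) :
    ∫ U : unitaryGroup m ℂ,
        trace ((U : Matrix m m ℂ) * X * (U : Matrix m m ℂ)ᴴ * Y) ^ 2 ∂μ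
      = trace (twirl μ (X ⊗ₖ X) * (Y ⊗ₖ Y)) := by
  simp only [trace_twirl_mul, conjKronecker_kronecker_self, ← mul_kronecker_mul, trace_kronecker,
    sq]

theorem trace_twirl_mul_of_isMulLeftInvariant [Nontrivial m] [IsProbabilityMeasure μ]
    [μ.IsMulLeftInvariant] (A R : Matrix (m × m) (m × m) ℂ) :
    trace (twirl μ A * R) =
      ((Fintype.card m * trace A - trace (A * swapMatrix ℂ m)) * trace R
        + (Fintype.card m * trace (A * swapMatrix ℂ m) - trace A) * trace (R * swapMatrix ℂ m))
        / (Fintype.card m * ((Fintype.card m : ℂ) ^ 2 - 1)) := by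
  obtain ⟨a, b, hab⟩ := exists_eq_smul_one_add_smul_swapMatrix
    (fun U hU => commute_kronecker_twirl μ hU A)
  have htrA := trace_twirl_mul_of_commute μ (fun U _ => Commute.one_right (U ⊗ₖ U)) A
  have htrAS := trace_twirl_mul_of_commute μ
    (fun U _ => (swapMatrix_mul_kronecker U U).symm) A
  rw [hab] at htrA htrAS ⊢
  simp only [add_mul, smul_mul, Matrix.one_mul, Matrix.mul_one, swapMatrix_mul_self, trace_add,
    trace_smul, trace_one, trace_swapMatrix, Fintype.card_prod, Nat.cast_mul, smul_eq_mul]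
    at htrA htrAS ⊢
  have hd : (Fintype.card m : ℂ) ≠ 0 := by exact_mod_cast Fintype.card_ne_zero
  have hd1 : (Fintype.card m : ℂ) ^ 2 - 1 ≠ 0 := by
    have := Fintype.one_lt_card (α := m)
    rw [sub_ne_zero]
    exact_mod_cast (Nat.one_lt_pow two_ne_zero this).ne'
  rw [eq_div_iff (mul_ne_zero hd hd1), trace_mul_comm (swapMatrix ℂ m) R]
  linear_combination (↑(Fintype.card m) * trace R - trace (R * swapMatrix ℂ m)) * htrA
    + (↑(Fintype.card m) * trace (R * swapMatrix ℂ m) - trace R) * htrAS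

end Twirl

section Qubits

open ThriftyShadow

instance (n : ℕ) : BorelSpace (UG n) := ⟨rfl⟩

variable {n : ℕ}

lemma tpow_const_two (X : Op n) :
    (tpow fun _ : Fin 2 => X)
      = (X ⊗ₖ X).submatrix (finTwoArrowEquiv (Idx n)) (finTwoArrowEquiv (Idx n)) := by
  ext x y
  simp [tpow, Fin.prod_univ_two]

lemma twirlEntry_submatrix (μ : Measure (UG n)) (A : Matrix (Idx n × Idx n) (Idx n × Idx n) ℂ)
    (x y : TIdx n 2) :
    twirlEntry μ (A.submatrix (finTwoArrowEquiv (Idx n)) (finTwoArrowEquiv (Idx n))) x y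
      = twirl μ A (finTwoArrowEquiv (Idx n) x) (finTwoArrowEquiv (Idx n) y) := by
  simp only [twirlEntry, twirl, tpow_const_two, submatrix_mul_equiv, conjKronecker,
    conjTranspose_kronecker, of_apply, submatrix_apply]

lemma twirl_eq_of_isTDesign {μ ν : Measure (UG n)} (h : IsTDesign 2 μ ν)
    (A : Matrix (Idx n × Idx n) (Idx n × Idx n) ℂ) : twirl μ A = twirl ν A := by
  ext p q
  have h := h (A.submatrix (finTwoArrowEquiv (Idx n)) (finTwoArrowEquiv (Idx n)))
    ((finTwoArrowEquiv (Idx n)).symm p) ((finTwoArrowEquiv (Idx n)).symm q)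
  rwa [twirlEntry_submatrix, twirlEntry_submatrix, Equiv.apply_symm_apply,
    Equiv.apply_symm_apply] at h

end Qubits

end TwoDesign

open ThriftyShadow TwoDesign Kronecker

/-- the second moment of `tr(U O U† ρ)` for a unitary 2-design. -/
theorem second_moment_two_design (n : ℕ)
    (μ ν : Measure (UG n)) [IsProbabilityMeasure μ]
    (hν : IsHaar ν) (hμν : IsTDesign 2 μ ν)
    (ρ O : Op n) (hρ : IsDensity ρ) (hO : O.IsHermitian) (hO0 : O.trace = 0) :
    (∫ U : UG n, (((U : Op n) * O * (U : Op n)ᴴ * ρ).trace) ^ 2 ∂μ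
        = (((dim n * purity ρ - 1) / (dim n * ((dim n) ^ 2 - 1)) * hsNormSq O : ℝ) : ℂ))
    ∧ (∫ U : UG n, ((O * ((U : Op n) * ρ * (U : Op n)ᴴ)).trace) ^ 2 ∂μ
        = (((dim n * purity ρ - 1) / (dim n * ((dim n) ^ 2 - 1)) * hsNormSq O : ℝ) : ℂ)) := by
  obtain ⟨hν_prob, hν_inv⟩ := hν
  have : ν.IsMulLeftInvariant := ⟨hν_inv⟩
  rcases Nat.eq_zero_or_pos n with rfl | hn
  -- `d = 1`: `O` is a traceless `1 × 1` matrix and the right-hand side divides by `d² - 1 = 0`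
  · have hO' : O = 0 := by
      ext i j
      rw [Subsingleton.elim j i, Matrix.zero_apply, ← hO0]
      exact (Fintype.sum_subsingleton (fun k => O k k) i).symm
    simp [hO', hsNormSq]
  have : NeZero n := ⟨hn.ne'⟩
  have hdim : (Fintype.card (Idx n) : ℂ) = dim n := by simp [dim]
  have hsecond : ∀ X Y : Op n,
      ∫ U : UG n, ((U : Op n) * X * (U : Op n)ᴴ * Y).trace ^ 2 ∂μ
        = trace (twirl ν (X ⊗ₖ X) * (Y ⊗ₖ Y)) := fun X Y => by
    rw [integral_trace_conj_mul_sq, twirl_eq_of_isTDesign hμν]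
  have hpurity : ((purity ρ : ℝ) : ℂ) = trace (ρ * ρ) := ofReal_re_trace_mul_self hρ.1.1
  have hnorm : ((hsNormSq O : ℝ) : ℂ) = trace (O * O) := ofReal_re_trace_mul_self hO
  simp_rw [trace_mul_comm O]
  rw [hsecond, hsecond]
  constructor <;>
  · rw [trace_twirl_mul_of_isMulLeftInvariant, trace_kronecker, trace_kronecker,
      trace_kronecker_mul_swapMatrix, trace_kronecker_mul_swapMatrix, hO0, hρ.2, hdim]
    push_cast
    rw [hpurity, hnorm]
    ring
end
end

section
/- Let O₁ and O₂ be Hermitian operators on the n-qubit Hilbert space. Then ‖Ξ̃_{O₁,O₂}‖₂² = ‖Ξ_{O₁,O₂}‖₂², that is, ∑_{P∈𝒫̄_n} (tr(O₁ P O₂ P))² = ∑_{P∈𝒫̄_n} (tr(O₁P))²(tr(O₂P))²; consequently |Ξ̃_{O₁,O₂}·Ξ_{O₁,O₂}| ≤ ‖Ξ_{O₁,O₂}‖₂². -/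
open MeasureTheory Matrix
open scoped BigOperators ENNReal Real ComplexConjugate ComplexOrder

noncomputable section

/-! Expanding in matrix entries, `tr(O₁ P O₂ P)` and `tr(O₁ P) tr(O₂ P)` are the same bilinear
form in the entries `O₁ a b`, `O₂ c e`, paired with the Pauli kernels `P b c * P e a` and
`P b a * P e c` respectively. After squaring and summing over `P`, only the fourth moments
`∑ P, P ⊗ P ⊗ P ⊗ P` of these kernels enter, and they agree: the fourth moment of the Pauli
operators is invariant under exchanging the column indices `a ↔ c` (a finite check for one qubit,
which tensorizes). The inequality is Cauchy–Schwarz, the traces being real for Hermitian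
operators. -/

open ThriftyShadow

section FourthMoment

variable {ι m R : Type*} [Fintype ι] [Fintype m] [CommSemiring R]

theorem sum_sq_sum_mul_eq_of_gram_eq {κ : Type*} [Fintype κ] (c : κ → R) (s t : ι → κ → R)
    (h : ∀ v w, ∑ i, s i v * s i w = ∑ i, t i v * t i w) :
    ∑ i, (∑ v, c v * s i v) ^ 2 = ∑ i, (∑ v, c v * t i v) ^ 2 := by
  have expand (u : ι → κ → R) :
      ∑ i, (∑ v, c v * u i v) ^ 2 = ∑ v, ∑ w, c v * c w * ∑ i, u i v * u i w := by
    calc ∑ i, (∑ v, c v * u i v) ^ 2 = ∑ i, ∑ v, ∑ w, c v * c w * (u i v * u i w) :=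
          Finset.sum_congr rfl fun i _ => by
            rw [sq, Finset.sum_mul_sum]
            exact Finset.sum_congr rfl fun v _ => Finset.sum_congr rfl fun w _ => by ring
      _ = ∑ v, ∑ w, ∑ i, c v * c w * (u i v * u i w) := by
          rw [Finset.sum_comm]
          exact Finset.sum_congr rfl fun v _ => Finset.sum_comm
      _ = ∑ v, ∑ w, c v * c w * ∑ i, u i v * u i w := by simp only [Finset.mul_sum]
  simp only [expand, h]

namespace Matrix

theorem trace_mul_mul_mul_mul (A B C D : Matrix m m R) :
    (A * B * C * D).trace
      = ∑ v : m × m × m × m,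
          A v.1 v.2.2.1 * C v.2.1 v.2.2.2 * (B v.2.2.1 v.2.1 * D v.2.2.2 v.1) := by
  simp only [trace, diag, mul_apply, Finset.sum_mul, Fintype.sum_prod_type]
  refine Finset.sum_congr rfl fun a _ => ?_
  rw [Finset.sum_comm]
  refine Finset.sum_congr rfl fun c _ => ?_
  rw [Finset.sum_comm]
  simp only [mul_assoc, mul_left_comm (B _ _)]

theorem trace_mul_mul_trace_mul (A B C D : Matrix m m R) :
    (A * B).trace * (C * D).trace
      = ∑ v : m × m × m × m,
          A v.1 v.2.2.1 * C v.2.1 v.2.2.2 * (B v.2.2.1 v.1 * D v.2.2.2 v.2.1) := by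
  simp only [trace, diag, mul_apply, Finset.sum_mul_sum, Fintype.sum_prod_type,
    mul_mul_mul_comm (A _ _)]

theorem sum_sq_trace_mul_mul_mul_eq_sum_sq_trace_mul_mul_trace_mul
    (A B : Matrix m m R) (P : ι → Matrix m m R)
    (hP : ∀ a b c e a' b' c' e' : m,
      ∑ i, P i b c * P i e a * (P i b' c' * P i e' a')
        = ∑ i, P i b a * P i e c * (P i b' a' * P i e' c')) :
    ∑ i, (A * P i * B * P i).trace ^ 2 = ∑ i, ((A * P i).trace * (B * P i).trace) ^ 2 := by
  simp only [trace_mul_mul_mul_mul, trace_mul_mul_trace_mul]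
  exact sum_sq_sum_mul_eq_of_gram_eq _ _ _ fun v w => hP _ _ _ _ _ _ _ _

theorem IsHermitian.star_trace_mul {α : Type*} [CommRing α] [StarRing α]
    {A B : Matrix m m α} (hA : A.IsHermitian) (hB : B.IsHermitian) :
    star (A * B).trace = (A * B).trace := by
  rw [← trace_conjTranspose, conjTranspose_mul, hA.eq, hB.eq, trace_mul_comm]

theorem IsHermitian.ofReal_re_trace_mul {A B : Matrix m m ℂ} (hA : A.IsHermitian)
    (hB : B.IsHermitian) : (((A * B).trace.re : ℝ) : ℂ) = (A * B).trace :=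
  Complex.conj_eq_iff_re.mp (hA.star_trace_mul hB)

end Matrix

end FourthMoment

theorem abs_sum_mul_le_of_sum_sq_eq {ι R : Type*} [CommRing R] [LinearOrder R]
    [IsStrictOrderedRing R] (s : Finset ι) (f g : ι → R)
    (h : ∑ i ∈ s, f i ^ 2 = ∑ i ∈ s, g i ^ 2) :
    |∑ i ∈ s, f i * g i| ≤ ∑ i ∈ s, g i ^ 2 :=
  abs_le_of_sq_le_sq ((Finset.sum_mul_sq_le_sq_mul_sq s f g).trans_eq (by rw [h, sq]))
    (Finset.sum_nonneg fun i _ => sq_nonneg (g i))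

namespace ThriftyShadow

theorem pauli1_fourth_moment_swap (a b c e a' b' c' e' : Fin 2) :
    ∑ x, pauli1 x b c * pauli1 x e a * (pauli1 x b' c' * pauli1 x e' a')
      = ∑ x, pauli1 x b a * pauli1 x e c * (pauli1 x b' a' * pauli1 x e' c') := by
  simp only [Fin.sum_univ_four, pauli1, Matrix.cons_val_zero, Matrix.cons_val_one,
    Matrix.cons_val_two, Matrix.cons_val_three]
  fin_cases a <;> fin_cases b <;> fin_cases c <;> fin_cases e <;>
    fin_cases a' <;> fin_cases b' <;> fin_cases c' <;> fin_cases e' <;>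
    simp

theorem pauliOp_fourth_moment_swap (n : ℕ) (a b c e a' b' c' e' : Idx n) :
    ∑ p, pauliOp n p b c * pauliOp n p e a * (pauliOp n p b' c' * pauliOp n p e' a')
      = ∑ p, pauliOp n p b a * pauliOp n p e c * (pauliOp n p b' a' * pauliOp n p e' c') := by
  simp only [pauliOp, Matrix.of_apply, ← Finset.prod_mul_distrib]
  exact (Fintype.prod_sum _).symm.trans <| (Finset.prod_congr rfl fun i _ =>
    pauli1_fourth_moment_swap (a i) (b i) (c i) (e i) (a' i) (b' i) (c' i) (e' i)).trans
    (Fintype.prod_sum _)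

theorem pauli1_conjTranspose (x : Fin 4) : (pauli1 x)ᴴ = pauli1 x := by
  fin_cases x <;> ext i j <;> fin_cases i <;> fin_cases j <;> simp [pauli1]

theorem pauliOp_isHermitian (n : ℕ) (p : PIdx n) : (pauliOp n p).IsHermitian := by
  ext x y
  simp only [Matrix.conjTranspose_apply, pauliOp, Matrix.of_apply, star_prod]
  exact Finset.prod_congr rfl fun i _ => congrFun₂ (pauli1_conjTranspose (p i)) (x i) (y i)

variable {n : ℕ} {A B : Op n}

theorem ofReal_crossXi (hA : A.IsHermitian) (hB : B.IsHermitian) (p : PIdx n) :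
    (crossXi A B p : ℂ) = (A * pauliOp n p).trace * (B * pauliOp n p).trace := by
  rw [crossXi, XiC, XiC, Complex.ofReal_mul, hA.ofReal_re_trace_mul (pauliOp_isHermitian n p),
    hB.ofReal_re_trace_mul (pauliOp_isHermitian n p)]

theorem ofReal_twistXi (hA : A.IsHermitian) (hB : B.IsHermitian) (p : PIdx n) :
    (twistXi A B p : ℂ) = (A * pauliOp n p * B * pauliOp n p).trace := by
  have hPBP : (pauliOp n p * B * pauliOp n p).IsHermitian := by
    simpa only [(pauliOp_isHermitian n p).eq] using
      Matrix.isHermitian_conjTranspose_mul_mul (pauliOp n p) hB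
  rw [twistXi, Matrix.mul_assoc A, Matrix.mul_assoc A, hA.ofReal_re_trace_mul hPBP]

end ThriftyShadow

/-- the twisted cross characteristic function has the same 2-norm as the
cross characteristic function. -/
theorem twisted_cross_char_norm (n : ℕ) (O₁ O₂ : Op n)
    (h₁ : O₁.IsHermitian) (h₂ : O₂.IsHermitian) :
    (∑ p : PIdx n, ((O₁ * pauliOp n p * O₂ * pauliOp n p).trace) ^ 2
        = ∑ p : PIdx n, ((O₁ * pauliOp n p).trace) ^ 2 * ((O₂ * pauliOp n p).trace) ^ 2)
    ∧ |∑ p : PIdx n, twistXi O₁ O₂ p * crossXi O₁ O₂ p|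
        ≤ ∑ p : PIdx n, (crossXi O₁ O₂ p) ^ 2 := by
  have hsq : ∑ p : PIdx n, ((O₁ * pauliOp n p * O₂ * pauliOp n p).trace) ^ 2
      = ∑ p : PIdx n, ((O₁ * pauliOp n p).trace) ^ 2 * ((O₂ * pauliOp n p).trace) ^ 2 := by
    simpa only [mul_pow] using Matrix.sum_sq_trace_mul_mul_mul_eq_sum_sq_trace_mul_mul_trace_mul
      O₁ O₂ (pauliOp n) (pauliOp_fourth_moment_swap n)
  refine ⟨hsq, abs_sum_mul_le_of_sum_sq_eq _ _ _ (Complex.ofReal_injective ?_)⟩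
  push_cast
  simpa only [ofReal_twistXi h₁ h₂, ofReal_crossXi h₁ h₂, mul_pow] using hsq
end
end

section
/- Let μ be a unitary 2-design on the n-qubit Hilbert space, ρ a density operator, O a traceless Hermitian operator, and for 0 ≤ p ≤ 1 let ρ_p = (1−p)ρ + p·𝟙/d be the depolarized state. Then V*(O, ρ_p) = (1−p)²·V*(O, ρ). -/
open MeasureTheory Matrix
open scoped BigOperators ENNReal Real ComplexConjugate ComplexOrder

noncomputable section

open ThriftyShadow

/-!
Write `s_V(X, Y) = ∑_b ⟨b|V X V†|b⟩⟨b|V Y V†|b⟩` (`diagOverlap V X Y`). Cyclicity of the trace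
turns the cross moment into `tr[Ω (X ⊗ Y ⊗ Z ⊗ T)] = E_V[s_V(X, Y) s_V(Z, T)]`. For unitary `V`
the form `s_V(O, ·)` is linear with `s_V(O, 𝟙) = tr O`, so for traceless `O` depolarizing `ρ`
rescales both `s_V(O, ρ)` and `tr(Oρ)` by `1 - p`, hence `V*(O, ρ)` by `(1 - p)²`.
-/

namespace ThriftyShadow

variable {n : ℕ}

lemma tpow_mul {t : ℕ} (f g : Fin t → Op n) :
    tpow f * tpow g = tpow fun i => f i * g i := by
  ext x y
  simp only [tpow, Matrix.mul_apply, Matrix.of_apply, ← Finset.prod_mul_distrib]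
  rw [← Fintype.piFinset_univ]
  exact Finset.sum_prod_piFinset _ fun i w => f i (x i) w * g i w (y i)

lemma trace_tpow {t : ℕ} (f : Fin t → Op n) : (tpow f).trace = ∏ i, (f i).trace := by
  simp only [Matrix.trace, Matrix.diag, tpow, Matrix.of_apply]
  rw [← Fintype.piFinset_univ]
  exact Finset.sum_prod_piFinset _ fun i w => f i w w

lemma continuous_tpow {X : Type*} [TopologicalSpace X] {t : ℕ} {F : X → Fin t → Op n}
    (hF : ∀ i, Continuous fun x => F x i) : Continuous fun x => tpow (F x) :=
  continuous_matrix fun _ _ => by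
    simp only [tpow, Matrix.of_apply]
    exact continuous_finsetProd _ fun i _ => (hF i).matrix_elem _ _

lemma continuous_conj_tpow {X : Type*} [TopologicalSpace X] {t : ℕ} {f : X → Op n}
    (hf : Continuous f) (K : TMat n t) :
    Continuous fun x => (tpow fun _ => (f x)ᴴ) * K * tpow fun _ => f x :=
  ((continuous_tpow fun _ => hf.matrix_conjTranspose).matrix_mul continuous_const).matrix_mul
    (continuous_tpow fun _ => hf)

lemma trace_ket_mul (a : Idx n) (A : Op n) : (ket n a * A).trace = A a a := by
  simp [ket, Matrix.trace_single_mul]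

def diagOverlap (V X Y : Op n) : ℂ := (V * X * Vᴴ).diag ⬝ᵥ (V * Y * Vᴴ).diag

lemma trace_conj_tpow_mul_tpow {t : ℕ} (V : Op n) (K : TMat n t) (g : Fin t → Op n) :
    ((tpow fun _ => Vᴴ) * K * (tpow fun _ => V) * tpow g).trace
      = (K * tpow fun i => V * g i * Vᴴ).trace := by
  rw [Matrix.mul_assoc, Matrix.mul_assoc, Matrix.trace_mul_comm, Matrix.mul_assoc, tpow_mul,
    tpow_mul]

lemma sum_trace_conj_ket_mul_tpow (V X Y Z T : Op n) :
    ∑ a : Idx n, ∑ b : Idx n, ((tpow fun _ => Vᴴ) * tpow ![ket n a, ket n a, ket n b, ket n b]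
        * (tpow fun _ => V) * tpow ![X, Y, Z, T]).trace
      = diagOverlap V X Y * diagOverlap V Z T := by
  simp only [trace_conj_tpow_mul_tpow]
  simp only [tpow_mul, trace_tpow, Fin.prod_univ_four,
    Matrix.cons_val_zero, Matrix.cons_val_one, Matrix.cons_val_two, Matrix.cons_val_three,
    Matrix.head_cons, Matrix.tail_cons, trace_ket_mul, diagOverlap, dotProduct,
    Finset.sum_mul_sum, Matrix.diag_apply]
  exact Finset.sum_congr rfl fun a _ => Finset.sum_congr rfl fun b _ => by ring

lemma diagOverlap_add_right (V X Y Z : Op n) :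
    diagOverlap V X (Y + Z) = diagOverlap V X Y + diagOverlap V X Z := by
  simp only [diagOverlap, Matrix.mul_add, Matrix.add_mul, Matrix.diag_add, dotProduct_add]

lemma diagOverlap_smul_right (V X Y : Op n) (c : ℂ) :
    diagOverlap V X (c • Y) = c * diagOverlap V X Y := by
  simp only [diagOverlap, Matrix.mul_smul, Matrix.smul_mul, Matrix.diag_smul, dotProduct_smul,
    smul_eq_mul]

lemma diagOverlap_one_right {V : Op n} (hV : V ∈ Matrix.unitaryGroup (Idx n) ℂ) (X : Op n) :
    diagOverlap V X 1 = X.trace := by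
  rw [diagOverlap, Matrix.mul_one, ← Matrix.star_eq_conjTranspose,
    Matrix.mem_unitaryGroup_iff.mp hV, Matrix.diag_one, dotProduct_one, ← Matrix.trace,
    Matrix.trace_mul_cycle, Matrix.mem_unitaryGroup_iff'.mp hV, Matrix.one_mul]

lemma isCompact_unitaryGroup {m 𝕜 : Type*} [Fintype m] [DecidableEq m] [RCLike 𝕜] :
    IsCompact (Matrix.unitaryGroup m 𝕜 : Set (Matrix m m 𝕜)) :=
  (isCompact_univ_pi fun _ => isCompact_univ_pi fun _ => isCompact_closedBall (0 : 𝕜) 1)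
    |>.of_isClosed_subset (isClosed_unitary (R := Matrix m m 𝕜)) fun U hU i _ j _ => by
      simpa using entry_norm_bound_of_unitary hU i j

instance : CompactSpace (UG n) := isCompact_iff_compactSpace.mp isCompact_unitaryGroup

instance : BorelSpace (UG n) := ⟨rfl⟩

section Integration

variable {α : Type*} [MeasurableSpace α] (ω : Measure α)

lemma trace_of_integral_mul {m : Type*} [Fintype m] {F : α → Matrix m m ℂ}
    (hF : ∀ i j, Integrable (fun x => F x i j) ω) (M : Matrix m m ℂ) :
    ((Matrix.of fun i j => ∫ x, F x i j ∂ω) * M).trace = ∫ x, (F x * M).trace ∂ω := by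
  simp only [Matrix.trace, Matrix.diag, Matrix.mul_apply, Matrix.of_apply,
    ← integral_mul_const]
  rw [integral_finsetSum _ fun i _ => integrable_finsetSum _ fun j _ => (hF i j).mul_const _]
  exact Finset.sum_congr rfl fun i _ =>
    (integral_finsetSum _ fun j _ => (hF i j).mul_const _).symm

variable [TopologicalSpace α] [OpensMeasurableSpace α] [CompactSpace α] [IsFiniteMeasure ω]
  {f : α → Op n}

lemma integrable_of_continuous {g : α → ℂ} (hg : Continuous g) : Integrable g ω :=
  hg.integrable_of_hasCompactSupport (.of_compactSpace g)

lemma trace_Omega_mul (hf : Continuous f) (M : TMat n 4) :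
    (Omega ω f * M).trace = ∫ x, ∑ a : Idx n, ∑ b : Idx n, ((tpow fun _ => (f x)ᴴ)
        * tpow ![ket n a, ket n a, ket n b, ket n b] * (tpow fun _ => f x) * M).trace ∂ω := by
  have hOmega : Omega ω f = ∑ a : Idx n, ∑ b : Idx n, Matrix.of fun i j => ∫ x,
      ((tpow fun _ => (f x)ᴴ) * tpow ![ket n a, ket n a, ket n b, ket n b]
        * (tpow fun _ => f x) : TMat n 4) i j ∂ω := by
    ext i j
    simp only [Omega, Matrix.of_apply, Matrix.sum_apply]
  have hcont a b := continuous_conj_tpow hf (tpow ![ket n a, ket n a, ket n b, ket n b])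
  simp only [hOmega, Matrix.sum_mul, Matrix.trace_sum]
  simp only [trace_of_integral_mul ω fun i j => integrable_of_continuous ω
    ((hcont _ _).matrix_elem i j)]
  rw [integral_finsetSum _ fun a _ => integrable_finsetSum _ fun b _ =>
    integrable_of_continuous ω ((hcont a b).matrix_mul continuous_const).matrix_trace]
  exact Finset.sum_congr rfl fun a _ => (integral_finsetSum _ fun b _ =>
    integrable_of_continuous ω ((hcont a b).matrix_mul continuous_const).matrix_trace).symm

lemma trace_Omega_mul_tpow (hf : Continuous f) (X Y Z T : Op n) :
    (Omega ω f * tpow ![X, Y, Z, T]).trace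
      = ∫ x, diagOverlap (f x) X Y * diagOverlap (f x) Z T ∂ω := by
  simp only [trace_Omega_mul ω hf, sum_trace_conj_ket_mul_tpow]

lemma Vstar_smul_add_smul_one (hf : Continuous f)
    (hU : ∀ x, f x ∈ Matrix.unitaryGroup (Idx n) ℂ) {O : Op n} (hO : O.trace = 0) (ρ : Op n)
    (c c' : ℝ) :
    Vstar ω f O ((c : ℂ) • ρ + (c' : ℂ) • 1) = c ^ 2 * Vstar ω f O ρ := by
  have hoverlap x : diagOverlap (f x) O ((c : ℂ) • ρ + (c' : ℂ) • 1)
      = c * diagOverlap (f x) O ρ := by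
    rw [diagOverlap_add_right, diagOverlap_smul_right, diagOverlap_smul_right,
      diagOverlap_one_right (hU x), hO, mul_zero, add_zero]
  have htrace : (O * ((c : ℂ) • ρ + (c' : ℂ) • 1)).trace = c * (O * ρ).trace := by
    rw [Matrix.mul_add, Matrix.mul_smul, Matrix.mul_smul, Matrix.trace_add, Matrix.trace_smul,
      Matrix.trace_smul, Matrix.mul_one, hO, smul_zero, add_zero, smul_eq_mul]
  simp only [Vstar, trace_Omega_mul_tpow ω hf, hoverlap, htrace, mul_mul_mul_comm (c : ℂ),
    integral_const_mul]
  rw [← Complex.re_ofReal_mul]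
  congr 1
  push_cast
  ring

end Integration

end ThriftyShadow

theorem reuse_variance_depolarized_general (n : ℕ)
    (μ : Measure (UG n)) [IsProbabilityMeasure μ]
    (ρ O : Op n) (hO0 : O.trace = 0)
    (p : ℝ) :
    VstarU μ O (((1 - p : ℝ) : ℂ) • ρ + ((p / dim n : ℝ) : ℂ) • (1 : Op n))
      = (1 - p) ^ 2 * VstarU μ O ρ :=
  Vstar_smul_add_smul_one μ continuous_subtype_val (fun U => U.2) hO0 ρ (1 - p) (p / dim n)

/-- effect of depolarizing noise on the reuse variance. -/
theorem reuse_variance_depolarized (n : ℕ)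
    (μ ν : Measure (UG n)) [IsProbabilityMeasure μ]
    (hν : IsHaar ν) (hμν : IsTDesign 2 μ ν)
    (ρ O : Op n) (hρ : IsDensity ρ) (hO : O.IsHermitian) (hO0 : O.trace = 0)
    (p : ℝ) (hp0 : 0 ≤ p) (hp1 : p ≤ 1) :
    VstarU μ O (((1 - p : ℝ) : ℂ) • ρ + ((p / dim n : ℝ) : ℂ) • (1 : Op n))
      = (1 - p) ^ 2 * VstarU μ O ρ :=
  reuse_variance_depolarized_general n μ ρ O hO0 p
end
end

section
/- Let n ≥ 1, 0 ≤ k ≤ n, θ ∈ ℝ, and let |S_{n,k}(θ)⟩ = |0⟩^{⊗(n−k)} ⊗ ((|0⟩ + e^{iθ}|1⟩)/√2)^{⊗k}. Then ∑_{P∈𝒫̄_n} ⟨S_{n,k}(θ)|P|S_{n,k}(θ)⟩⁴ = 2^{n−k}·(1 + cos⁴θ + sin⁴θ)^k, and consequently the stabilizer 2-Rényi entropy is M₂(S_{n,k}(θ)) = −k·log₂((cos(4θ) + 7)/8). -/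
open MeasureTheory Matrix
open scoped BigOperators ENNReal Real ComplexConjugate ComplexOrder

noncomputable section

open ThriftyShadow

/-- the product state `|S_{n,k}(θ)⟩ = |0⟩^{⊗(n-k)} ⊗ ((|0⟩+e^{iθ}|1⟩)/√2)^{⊗k}` -/
def sState (n k : ℕ) (θ : ℝ) : Idx n → ℂ := fun b =>
  ∏ i : Fin n,
    if (i : ℕ) < n - k then (if b i = 0 then (1 : ℂ) else 0)
    else (if b i = 0 then ((Real.sqrt 2 : ℂ))⁻¹
          else Complex.exp (Complex.I * θ) * ((Real.sqrt 2 : ℂ))⁻¹)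

/-! Pauli strings are tensor products and `|S_{n,k}(θ)⟩` is a product state, so every expectation
`⟨S|P|S⟩` is a product of single-qubit expectations: `(1, 0, 0, 1)` on `|0⟩` and the Bloch vector
`(1, cos θ, sin θ, 0)` on `(|0⟩ + e^{iθ}|1⟩)/√2`. Summing fourth powers over all Pauli strings then
factorises qubit by qubit into `2^{n-k} (1 + cos⁴θ + sin⁴θ)^k`, and
`1 + cos⁴θ + sin⁴θ = (cos 4θ + 7)/4`. -/

section ProductState

variable {ι σ R : Type*} [Fintype ι] [DecidableEq ι] [Fintype σ] [CommSemiring R] [StarRing R]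

theorem star_dotProduct_mulVec_prod (A : ι → Matrix σ σ R) (v : ι → σ → R) :
    star (fun b : ι → σ => ∏ i, v i (b i)) ⬝ᵥ
        (Matrix.of fun x y : ι → σ => ∏ i, A i (x i) (y i)) *ᵥ (fun b => ∏ i, v i (b i))
      = ∏ i, star (v i) ⬝ᵥ A i *ᵥ v i := by
  simp only [dotProduct, mulVec, Pi.star_apply, star_prod, Finset.mul_sum, Matrix.of_apply,
    ← Finset.prod_mul_distrib]
  rw [Finset.prod_univ_sum]
  refine Fintype.sum_congr _ _ fun x => ?_
  rw [Finset.prod_univ_sum]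
  exact Fintype.sum_congr _ _ fun y => Finset.prod_congr rfl fun i _ => by ring

end ProductState

theorem prod_fin_ite_lt {M : Type*} [CommMonoid M] {n m : ℕ} (h : m ≤ n) (a b : M) :
    ∏ i : Fin n, (if (i : ℕ) < m then a else b) = a ^ m * b ^ (n - m) := by
  rw [Fin.prod_univ_eq_prod_range (fun i => if i < m then a else b), ← Nat.add_sub_cancel' h,
    Finset.prod_range_add, Nat.add_sub_cancel_left]
  simp [Finset.prod_ite_of_true]

theorem one_add_cos_pow_four_add_sin_pow_four (θ : ℝ) :
    1 + Real.cos θ ^ 4 + Real.sin θ ^ 4 = (Real.cos (4 * θ) + 7) / 4 := by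
  have h4 : Real.cos (4 * θ) = 2 * Real.cos (2 * θ) ^ 2 - 1 := by
    rw [show 4 * θ = 2 * (2 * θ) by ring, Real.cos_two_mul]
  rw [h4, Real.cos_two_mul, show Real.sin θ ^ 4 = (Real.sin θ ^ 2) ^ 2 by ring, Real.sin_sq]
  ring

def zeroKet : Fin 2 → ℂ := ![1, 0]

def phaseKet (θ : ℝ) : Fin 2 → ℂ :=
  ![(Real.sqrt 2 : ℂ)⁻¹, Complex.exp (Complex.I * θ) * (Real.sqrt 2 : ℂ)⁻¹]

theorem pauli_expect_zeroKet (c : Fin 4) :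
    star zeroKet ⬝ᵥ pauli1 c *ᵥ zeroKet = ((![1, 0, 0, 1] : Fin 4 → ℝ) c : ℂ) := by
  fin_cases c <;> simp [zeroKet, pauli1, dotProduct, mulVec, Fin.sum_univ_two]

theorem pauli_expect_phaseKet (θ : ℝ) (c : Fin 4) :
    star (phaseKet θ) ⬝ᵥ pauli1 c *ᵥ phaseKet θ
      = ((![1, Real.cos θ, Real.sin θ, 0] : Fin 4 → ℝ) c : ℂ) := by
  have hsqrt : (Real.sqrt 2 : ℂ)⁻¹ * (Real.sqrt 2 : ℂ)⁻¹ = 2⁻¹ := by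
    rw [← mul_inv, ← Complex.ofReal_mul, Real.mul_self_sqrt zero_le_two, Complex.ofReal_ofNat]
  have hexp : Complex.exp (Complex.I * θ) = Real.cos θ + Real.sin θ * Complex.I := by
    rw [mul_comm, Complex.exp_mul_I, ← Complex.ofReal_cos, ← Complex.ofReal_sin]
  have hcs : (Real.cos θ : ℂ) ^ 2 + (Real.sin θ : ℂ) ^ 2 = 1 := by
    exact_mod_cast Real.cos_sq_add_sin_sq θ
  fin_cases c <;>
    simp only [phaseKet, pauli1, dotProduct, mulVec, Fin.sum_univ_two, hexp] <;> simp <;>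
    simp only [← Complex.ofReal_cos, ← Complex.ofReal_sin, Complex.conj_ofReal]
  · linear_combination (1 + (Real.cos θ : ℂ) ^ 2 + (Real.sin θ : ℂ) ^ 2) * hsqrt + 2⁻¹ * hcs
      - (Real.sqrt 2 : ℂ)⁻¹ ^ 2 * (Real.sin θ : ℂ) ^ 2 * Complex.I_sq
  · linear_combination 2 * (Real.cos θ : ℂ) * hsqrt
  · linear_combination 2 * (Real.sin θ : ℂ) * hsqrt
      - 2 * (Real.sqrt 2 : ℂ)⁻¹ ^ 2 * (Real.sin θ : ℂ) * Complex.I_sq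
  · linear_combination (1 - (Real.cos θ : ℂ) ^ 2 - (Real.sin θ : ℂ) ^ 2) * hsqrt - 2⁻¹ * hcs
      + (Real.sqrt 2 : ℂ)⁻¹ ^ 2 * (Real.sin θ : ℂ) ^ 2 * Complex.I_sq

def sStateQubit (n k : ℕ) (θ : ℝ) (i : Fin n) : Fin 2 → ℂ :=
  if (i : ℕ) < n - k then zeroKet else phaseKet θ

def sStateQubitPauliExp (n k : ℕ) (θ : ℝ) (i : Fin n) : Fin 4 → ℝ :=
  if (i : ℕ) < n - k then ![1, 0, 0, 1] else ![1, Real.cos θ, Real.sin θ, 0]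

theorem sState_eq_prod (n k : ℕ) (θ : ℝ) :
    sState n k θ = fun b => ∏ i, sStateQubit n k θ i (b i) := by
  funext b
  refine Finset.prod_congr rfl fun i _ => ?_
  generalize b i = a
  fin_cases a <;> by_cases (i : ℕ) < n - k <;> simp [*, sStateQubit, zeroKet, phaseKet]

theorem pauli_expect_sStateQubit (n k : ℕ) (θ : ℝ) (i : Fin n) (c : Fin 4) :
    star (sStateQubit n k θ i) ⬝ᵥ pauli1 c *ᵥ sStateQubit n k θ i
      = (sStateQubitPauliExp n k θ i c : ℂ) := by
  unfold sStateQubit sStateQubitPauliExp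
  split_ifs
  exacts [pauli_expect_zeroKet c, pauli_expect_phaseKet θ c]

theorem pExp_sState (n k : ℕ) (θ : ℝ) (p : PIdx n) :
    pExp (sState n k θ) p = ∏ i, sStateQubitPauliExp n k θ i (p i) := by
  rw [pExp, sState_eq_prod, pauliOp, star_dotProduct_mulVec_prod]
  simp_rw [pauli_expect_sStateQubit]
  rw [← Complex.ofReal_prod, Complex.ofReal_re]

theorem sum_sStateQubitPauliExp_pow_four (n k : ℕ) (θ : ℝ) (i : Fin n) :
    ∑ c, sStateQubitPauliExp n k θ i c ^ 4
      = if (i : ℕ) < n - k then 2 else 1 + Real.cos θ ^ 4 + Real.sin θ ^ 4 := by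
  unfold sStateQubitPauliExp
  split_ifs
  · simp [Fin.sum_univ_four]; norm_num
  · simp [Fin.sum_univ_four]

theorem sum_pExp_sState_pow_four {n k : ℕ} (hk : k ≤ n) (θ : ℝ) :
    ∑ p : PIdx n, pExp (sState n k θ) p ^ 4
      = 2 ^ (n - k) * (1 + Real.cos θ ^ 4 + Real.sin θ ^ 4) ^ k := by
  simp_rw [pExp_sState, ← Finset.prod_pow]
  rw [← Fintype.prod_sum (fun i c => sStateQubitPauliExp n k θ i c ^ 4)]
  simp_rw [sum_sStateQubitPauliExp_pow_four]
  rw [prod_fin_ite_lt (Nat.sub_le n k), Nat.sub_sub_self hk]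

theorem sState_SRE_general (n k : ℕ) (hk : k ≤ n) (θ : ℝ) :
    (∑ p : PIdx n, (pExp (sState n k θ) p) ^ 4
      = 2 ^ (n - k) * (1 + Real.cos θ ^ 4 + Real.sin θ ^ 4) ^ k)
    ∧ M2 (sState n k θ) = -(k : ℝ) * Real.logb 2 ((Real.cos (4 * θ) + 7) / 8) := by
  have hsum := sum_pExp_sState_pow_four hk θ
  refine ⟨hsum, ?_⟩
  have hmean : (dim n)⁻¹ * ∑ p : PIdx n, pExp (sState n k θ) p ^ 4
      = ((Real.cos (4 * θ) + 7) / 8) ^ k := by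
    rw [hsum, one_add_cos_pow_four_add_sin_pow_four, dim, ← Nat.sub_add_cancel hk, pow_add,
      Nat.add_sub_cancel,
      show (Real.cos (4 * θ) + 7) / 4 = 2 * ((Real.cos (4 * θ) + 7) / 8) by ring, mul_pow]
    field_simp
  rw [M2, hmean, Real.logb_pow]
  ring

/-- characteristic-function norms and stabilizer 2-Rényi entropy of
the states `|S_{n,k}(θ)⟩`. -/
theorem sState_SRE (n k : ℕ) (hn : 1 ≤ n) (hk : k ≤ n) (θ : ℝ) :
    (∑ p : PIdx n, (pExp (sState n k θ) p) ^ 4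
      = 2 ^ (n - k) * (1 + Real.cos θ ^ 4 + Real.sin θ ^ 4) ^ k)
    ∧ M2 (sState n k θ) = -(k : ℝ) * Real.logb 2 ((Real.cos (4 * θ) + 7) / 8) :=
  sState_SRE_general n k hk θ
end
end
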